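/- Let s ≥ 2 be an integer. The set S = { x ∈ ℝ : ∃ c : ℕ → ℕ, (∀ n, c n ≤ s − 1) ∧ x = ∑_{n=0}^∞ c n / s^{2(n+1)} } (that is, the set of numbers in [0,1] whose s-adic expansion has digit 0 at every odd position, equivalently the set of invariant points of the function f₊) has Hausdorff dimension equal to 1/2. (Paper's Lemma 9.) -/

import Mathlib

/-!
The set is the image of the base-`s` digit sequences `c` under `c ↦ ∑ cₙ s^(-2(n+1))`, i.e. under
reading them in base `s²`. The `s^n` cylinders of level `n` cover it by sets of diameter
`s^(-2n)`, so its `1/2`-dimensional Hausdorff measure is at most `1`. Conversely, if two digit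
sequences first differ at position `N`, their base-`s²` values are at least `s^(-2(N+1))/2` apart
(the digits are `< s`, so the tails are small), while their base-`s` values are at most `s^(-N)`
apart. Hence the base-`s` value is a `1/2`-Hölder function of the base-`s²` value, and it maps
the set onto `[0, 1]`, which forces the dimension to be at least `1/2`.
-/

open Set Filter Topology MeasureTheory Metric Real
open scoped ENNReal NNReal

theorem dimH_range_le_of_edist_le {α X Y : Type*} [EMetricSpace X] [EMetricSpace Y]
    {p : α → X} {q : α → Y} {C r : ℝ≥0} (hr : 0 < r)
    (h : ∀ a b, edist (p a) (p b) ≤ C * edist (q a) (q b) ^ (r : ℝ)) :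
    dimH (range p) ≤ dimH (range q) / r := by
  cases isEmpty_or_nonempty α
  · simp [range_eq_empty]
  have hp : ∀ a, p (Function.invFun q (q a)) = p a := fun a => by
    simpa [Function.invFun_eq ⟨a, rfl⟩, ENNReal.zero_rpow_of_pos (NNReal.coe_pos.2 hr)]
      using h (Function.invFun q (q a)) a
  have hg : HolderOnWith C r (p ∘ Function.invFun q) (range q) := by
    rintro _ ⟨a, rfl⟩ _ ⟨b, rfl⟩
    simpa only [Function.comp_apply, hp] using h a b
  have himage : p ∘ Function.invFun q '' range q = range p := by
    rw [← range_comp]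
    exact congrArg range (funext hp)
  exact himage ▸ hg.dimH_image_le hr

theorem dimH_le_of_covers {X : Type*} [EMetricSpace X] [MeasurableSpace X] [BorelSpace X]
    {S : Set X} {ι : ℕ → Type*} [∀ n, Fintype (ι n)] (t : ∀ n, ι n → Set X)
    (hcover : ∀ n, S ⊆ ⋃ i, t n i)
    {δ : ℕ → ℝ≥0∞} (hδ : Tendsto δ atTop (𝓝 0)) (hdiam : ∀ n i, ediam (t n i) ≤ δ n)
    {d : ℝ≥0} {C : ℝ≥0∞} (hC : C ≠ ∞) (hcard : ∀ n, Fintype.card (ι n) * δ n ^ (d : ℝ) ≤ C) :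
    dimH S ≤ d := by
  refine dimH_le_of_hausdorffMeasure_ne_top (ne_top_of_le_ne_top hC ?_)
  calc μH[d] S ≤ liminf (fun n => ∑ i, ediam (t n i) ^ (d : ℝ)) atTop :=
        Measure.hausdorffMeasure_le_liminf_sum _ S δ hδ t (.of_forall hdiam) (.of_forall hcover)
    _ ≤ C := by
      refine liminf_le_of_frequently_le' (.of_forall fun n => ?_)
      calc ∑ i, ediam (t n i) ^ (d : ℝ) ≤ ∑ _ : ι n, δ n ^ (d : ℝ) :=
            Finset.sum_le_sum fun i _ => ENNReal.rpow_le_rpow (hdiam n i) d.2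
        _ ≤ C := by simpa using hcard n

theorem Real.ofDigits_le_of_forall_le {b k : ℕ} (hb : 1 < b) {a : ℕ → Fin b}
    (h : ∀ n, (a n : ℕ) ≤ k) : ofDigits a ≤ k / (b - 1) := by
  have hb' : (1 : ℝ) < b := by exact_mod_cast hb
  have hgeom : HasSum (fun n : ℕ => (k : ℝ) * ((b : ℝ) ^ (n + 1))⁻¹) (k / (b - 1)) := by
    have hterm : (fun n : ℕ => (k : ℝ) * ((b : ℝ) ^ (n + 1))⁻¹)
        = fun n => (k : ℝ) * (b : ℝ)⁻¹ * (b : ℝ)⁻¹ ^ n := by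
      ext n
      rw [pow_succ', mul_inv, inv_pow]
      ring
    have hsum : (k : ℝ) / (b - 1) = k * (b : ℝ)⁻¹ * (1 - (b : ℝ)⁻¹)⁻¹ := by
      have : (b : ℝ) - 1 ≠ 0 := by linarith
      field_simp
    rw [hterm, hsum]
    exact (hasSum_geometric_of_lt_one (by positivity) (inv_lt_one_of_one_lt₀ hb')).mul_left _
  refine hasSum_le (fun n => ?_) summable_ofDigitsTerm.hasSum hgeom
  unfold ofDigitsTerm
  gcongr
  exact_mod_cast h n

/-- The base-`s` digits `c` read in base `s²`: `∑ cₙ / s^(2(n+1))`. -/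
noncomputable def ofDigitsInSqBase {s : ℕ} (c : ℕ → Fin s) : ℝ :=
  ofDigits (Fin.castLE (Nat.le_self_pow two_ne_zero s) ∘ c)

section ofDigitsInSqBase

variable {s : ℕ}

theorem ofDigitsInSqBase_eq_tsum (c : ℕ → Fin s) :
    ofDigitsInSqBase c = ∑' n : ℕ, (c n : ℝ) / (s : ℝ) ^ (2 * (n + 1)) := by
  simp [ofDigitsInSqBase, ofDigits, ofDigitsTerm, pow_mul, div_eq_mul_inv]

theorem setOf_eq_range_ofDigitsInSqBase (hs : 0 < s) :
    {x : ℝ | ∃ c : ℕ → ℕ, (∀ n, c n ≤ s - 1) ∧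
      x = ∑' n : ℕ, (c n : ℝ) / (s : ℝ) ^ (2 * (n + 1))} = range (ofDigitsInSqBase (s := s)) := by
  ext x
  constructor
  · rintro ⟨c, hc, rfl⟩
    exact ⟨fun n => ⟨c n, Nat.lt_of_le_sub_one hs (hc n)⟩, ofDigitsInSqBase_eq_tsum _⟩
  · rintro ⟨c, rfl⟩
    exact ⟨fun n => c n, fun n => Nat.le_sub_one_of_lt (c n).2, ofDigitsInSqBase_eq_tsum c⟩

theorem ofDigitsInSqBase_le (hs : 1 < s) (c : ℕ → Fin s) :
    ofDigitsInSqBase c ≤ (s + 1 : ℝ)⁻¹ := by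
  have hs' : (1 : ℝ) < s := by exact_mod_cast hs
  calc ofDigitsInSqBase c ≤ ((s - 1 : ℕ) : ℝ) / ((s ^ 2 : ℕ) - 1) :=
        ofDigits_le_of_forall_le (Nat.one_lt_pow two_ne_zero hs) fun n =>
          Nat.le_sub_one_of_lt (c n).2
    _ = (s + 1 : ℝ)⁻¹ := by
      have : (s : ℝ) - 1 ≠ 0 := by linarith
      push_cast [hs.le]
      rw [show (s : ℝ) ^ 2 - 1 = (s - 1) * (s + 1) by ring, ← div_div, div_self this, one_div]

theorem ofDigitsInSqBase_eq_sum_add (c : ℕ → Fin s) (N : ℕ) :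
    ofDigitsInSqBase c = ∑ i ∈ Finset.range N, (c i : ℝ) * (((s : ℝ) ^ 2) ^ (i + 1))⁻¹ +
      (((s : ℝ) ^ 2) ^ N)⁻¹ * ofDigitsInSqBase (fun i => c (i + N)) := by
  rw [ofDigitsInSqBase, ofDigits_eq_sum_add_ofDigits _ N]
  simp [ofDigitsTerm, ofDigitsInSqBase, Function.comp_def]

theorem inv_pow_le_abs_ofDigitsInSqBase_sub (hs : 1 < s) {c d : ℕ → Fin s} {N : ℕ}
    (hlt : ∀ i < N, c i = d i) (hN : c N ≠ d N) :
    (((s : ℝ) ^ 2) ^ (N + 1))⁻¹ / 2 ≤ |ofDigitsInSqBase c - ofDigitsInSqBase d| := by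
  set B := (((s : ℝ) ^ 2) ^ (N + 1))⁻¹
  have hB : 0 < B := by positivity
  have hhead : ∑ i ∈ Finset.range N, (c i : ℝ) * (((s : ℝ) ^ 2) ^ (i + 1))⁻¹ =
      ∑ i ∈ Finset.range N, (d i : ℝ) * (((s : ℝ) ^ 2) ^ (i + 1))⁻¹ :=
    Finset.sum_congr rfl fun i hi => by rw [hlt i (Finset.mem_range.1 hi)]
  have htail (e : ℕ → Fin s) : 0 ≤ B * ofDigitsInSqBase e ∧ B * ofDigitsInSqBase e ≤ B / 2 := by
    refine ⟨mul_nonneg hB.le (ofDigits_nonneg _), ?_⟩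
    calc B * ofDigitsInSqBase e ≤ B * (s + 1 : ℝ)⁻¹ := by gcongr; exact ofDigitsInSqBase_le hs e
      _ ≤ B / 2 := by
        rw [div_eq_mul_inv]
        gcongr
        norm_cast
        omega
  obtain ⟨hc0, hc1⟩ := htail fun i => c (i + (N + 1))
  obtain ⟨hd0, hd1⟩ := htail fun i => d (i + (N + 1))
  rw [ofDigitsInSqBase_eq_sum_add c (N + 1), ofDigitsInSqBase_eq_sum_add d (N + 1),
    Finset.sum_range_succ, Finset.sum_range_succ, hhead]
  rcases Nat.lt_or_gt_of_ne (Fin.val_ne_of_ne hN) with h | h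
  · have : (c N : ℝ) + 1 ≤ d N := by exact_mod_cast h
    rw [abs_sub_comm]
    refine le_trans ?_ (le_abs_self _)
    nlinarith
  · have : (d N : ℝ) + 1 ≤ c N := by exact_mod_cast h
    refine le_trans ?_ (le_abs_self _)
    nlinarith

theorem abs_ofDigits_sub_le_mul_sqrt (hs : 1 < s) (c d : ℕ → Fin s) :
    |ofDigits c - ofDigits d| ≤ 2 * s * √|ofDigitsInSqBase c - ofDigitsInSqBase d| := by
  obtain rfl | hcd := eq_or_ne c d
  · simp
  set N := PiNat.firstDiff c d
  have hlt : ∀ i < N, c i = d i := fun i hi => PiNat.apply_eq_of_lt_firstDiff hi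
  have hp : |ofDigits c - ofDigits d| ≤ ((s : ℝ) ^ N)⁻¹ := abs_ofDigits_sub_ofDigits_le hlt
  have hq := inv_pow_le_abs_ofDigitsInSqBase_sub hs hlt (PiNat.apply_firstDiff_ne hcd)
  have hs0 : (0 : ℝ) < s := by positivity
  have hpow : (((s : ℝ) ^ 2) ^ (N + 1))⁻¹ = ((s : ℝ) ^ N)⁻¹ ^ 2 / s ^ 2 := by
    field_simp
    ring
  rw [← pow_le_pow_iff_left₀ (abs_nonneg _) (by positivity) two_ne_zero, mul_pow,
    Real.sq_sqrt (abs_nonneg _)]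
  have := pow_le_pow_left₀ (abs_nonneg _) hp 2
  rw [hpow, div_div, div_le_iff₀ (by positivity)] at hq
  nlinarith [mul_nonneg (sq_nonneg (s : ℝ)) (abs_nonneg (ofDigitsInSqBase c - ofDigitsInSqBase d))]

theorem edist_ofDigits_le (hs : 1 < s) (c d : ℕ → Fin s) :
    edist (ofDigits c) (ofDigits d) ≤
      (2 * s : ℝ≥0) * edist (ofDigitsInSqBase c) (ofDigitsInSqBase d) ^ ((2⁻¹ : ℝ≥0) : ℝ) := by
  rw [edist_dist, edist_dist, Real.dist_eq, Real.dist_eq,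
    ENNReal.ofReal_rpow_of_nonneg (abs_nonneg _) (by positivity), ← ENNReal.ofReal_coe_nnreal,
    ← ENNReal.ofReal_mul (by positivity)]
  apply ENNReal.ofReal_le_ofReal
  rw [NNReal.coe_inv, NNReal.coe_ofNat, ← one_div, ← Real.sqrt_eq_rpow]
  push_cast
  exact abs_ofDigits_sub_le_mul_sqrt hs c d

theorem le_dimH_range_ofDigitsInSqBase (hs : 1 < s) :
    2⁻¹ ≤ dimH (range (ofDigitsInSqBase (s := s))) := by
  have hIcc : 1 ≤ dimH (range (ofDigits (b := s))) :=
    calc (1 : ℝ≥0∞) = dimH (Icc (0 : ℝ) 1) := by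
          rw [Real.dimH_of_nonempty_interior (by simp)]
          simp
      _ ≤ _ := dimH_mono (ofDigits_SurjOn hs).subset_range
  have := hIcc.trans (dimH_range_le_of_edist_le (by norm_num) (edist_ofDigits_le hs))
  rw [ENNReal.coe_inv two_ne_zero, ENNReal.coe_ofNat, div_eq_mul_inv, inv_inv] at this
  rwa [ENNReal.inv_le_iff_le_mul (by simp) (by simp), mul_comm]

theorem dimH_range_ofDigitsInSqBase_le (hs : 1 < s) :
    dimH (range (ofDigitsInSqBase (s := s))) ≤ (2⁻¹ : ℝ≥0) := by
  have hs0 : (s : ℝ≥0∞) ≠ 0 := Nat.cast_ne_zero.2 (by omega)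
  refine dimH_le_of_covers (ι := fun n => Fin n → Fin s)
    (fun n v => ofDigitsInSqBase '' {c | ∀ i : Fin n, c i = v i}) ?_
    (δ := fun n => ((s : ℝ≥0∞)⁻¹ ^ 2) ^ n) ?_ ?_ ENNReal.one_ne_top ?_
  · rintro n _ ⟨c, rfl⟩
    exact mem_iUnion.2 ⟨fun i => c i, c, fun i => rfl, rfl⟩
  · exact ENNReal.tendsto_pow_atTop_nhds_zero_of_lt_one
      (pow_lt_one₀ zero_le (ENNReal.inv_lt_one.2 (by exact_mod_cast hs)) two_ne_zero)
  · intro n v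
    refine ediam_image_le_iff.2 fun c hc d hd => ?_
    have hcast := Nat.le_self_pow two_ne_zero s
    have : |ofDigitsInSqBase c - ofDigitsInSqBase d| ≤ (((s ^ 2 : ℕ) : ℝ) ^ n)⁻¹ :=
      abs_ofDigits_sub_ofDigits_le (x := Fin.castLE hcast ∘ c) (y := Fin.castLE hcast ∘ d)
        fun i hi => by simp [hc ⟨i, hi⟩, hd ⟨i, hi⟩]
    rw [edist_dist, Real.dist_eq]
    refine (ENNReal.ofReal_le_ofReal this).trans_eq ?_
    rw [ENNReal.ofReal_inv_of_pos (by positivity), ENNReal.ofReal_pow (by positivity),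
      ENNReal.ofReal_natCast, Nat.cast_pow, ← ENNReal.inv_pow, ← ENNReal.inv_pow]
  · intro n
    simp only [Fintype.card_fun, Fintype.card_fin, Nat.cast_pow]
    rw [← pow_mul, mul_comm 2 n, pow_mul, show ((2⁻¹ : ℝ≥0) : ℝ) = ((2 : ℕ) : ℝ)⁻¹ by norm_num,
      ENNReal.pow_rpow_inv_natCast two_ne_zero, ← mul_pow,
      ENNReal.mul_inv_cancel hs0 (ENNReal.natCast_ne_top s), one_pow]

end ofDigitsInSqBase

theorem stmt_6 (s : ℕ) (hs : 2 ≤ s) :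
    dimH {x : ℝ | ∃ c : ℕ → ℕ, (∀ n, c n ≤ s - 1) ∧
      x = ∑' n : ℕ, (c n : ℝ) / (s : ℝ) ^ (2 * (n + 1))} = 1 / 2 := by
  rw [setOf_eq_range_ofDigitsInSqBase (by omega), one_div]
  refine le_antisymm ?_ (le_dimH_range_ofDigitsInSqBase hs)
  simpa using dimH_range_ofDigitsInSqBase_le hs
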